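/- arXiv:gr-qc/0212071 — 3 statements merged into one kernel-verified Lean document; each statement's English description precedes it below -/
import Mathlib

section
/- Let a > 0, b ∈ ℝ, and let F : ℝ³ × ℝ → ℝ³ be a smooth map. Then the following are equivalent: (i) for every twice-differentiable path x : ℝ → ℝ³ with x''(t) = 0 for all t, the transformed path y(s) := F(x((s−b)/a), (s−b)/a) satisfies y''(s) = 0 for all s; (ii) there exist a matrix A ∈ M₃(ℝ) and vectors B, C ∈ ℝ³ such that F(x,t) = A x + B t + C for all x ∈ ℝ³, t ∈ ℝ. Moreover, if in addition F(·,t) is bijective for each t, then A is invertible. -/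
/-- Second derivative along a line, for a smooth map. -/
lemma deriv2_line' {E F : Type*} [NormedAddCommGroup E] [NormedSpace ℝ E]
    [NormedAddCommGroup F] [NormedSpace ℝ F]
    {G : E → F} (hG : ContDiff ℝ (⊤ : ℕ∞) G) (q0 u0 : E) (s : ℝ) :
    deriv (deriv (fun s' => G (q0 + s' • u0))) s
      = fderiv ℝ (fderiv ℝ G) (q0 + s • u0) u0 u0 := by
  have hG1 : Differentiable ℝ G := hG.differentiable (by simp)
  have hH : ContDiff ℝ (⊤ : ℕ∞) (fderiv ℝ G) := hG.fderiv_right (by simp)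
  have hH1 : Differentiable ℝ (fderiv ℝ G) := hH.differentiable (by simp)
  have h0 : deriv (fun s' => G (q0 + s' • u0)) = fun s' : ℝ => fderiv ℝ G (q0 + s' • u0) u0 := by
    funext s'
    have h1 : HasDerivAt (fun s'' : ℝ => q0 + s'' • u0) u0 s' := by
      simpa using ((hasDerivAt_id s').smul_const u0).const_add q0
    exact ((hG1 (q0 + s' • u0)).hasFDerivAt.comp_hasDerivAt s' h1).deriv
  rw [h0]
  have h1 : HasDerivAt (fun s' : ℝ => q0 + s' • u0) u0 s := by
    simpa using ((hasDerivAt_id s).smul_const u0).const_add q0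
  have h2 : HasDerivAt (fun s' => fderiv ℝ G (q0 + s' • u0))
      (fderiv ℝ (fderiv ℝ G) (q0 + s • u0) u0) s :=
    ((hH1 (q0 + s • u0)).hasFDerivAt.comp_hasDerivAt s h1)
  have h3 := h2.clm_apply (hasDerivAt_const s u0)
  simpa using h3.deriv

/-- A function `ℝ → F` with vanishing second derivative is a line. -/
lemma line_of_deriv2_zero {F : Type*} [NormedAddCommGroup F] [NormedSpace ℝ F]
    {x : ℝ → F} (hx : Differentiable ℝ x) (hx' : Differentiable ℝ (deriv x))
    (hx'' : ∀ t, deriv (deriv x) t = 0) :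
    ∀ t : ℝ, x t = x 0 + t • deriv x 0 := by
  have hconst : ∀ t, deriv x t = deriv x 0 := by
    intro t
    apply is_const_of_fderiv_eq_zero hx'
    intro z
    ext
    simp only [ContinuousLinearMap.zero_apply]
    rw [← toSpanSingleton_deriv]
    simpa using hx'' z
  intro t
  set v := deriv x 0 with hv
  have hg : Differentiable ℝ (fun t : ℝ => x t - t • v) := by
    apply hx.sub
    exact fun t => ((hasDerivAt_id t).smul_const v).differentiableAt
  have : ∀ z : ℝ, fderiv ℝ (fun t : ℝ => x t - t • v) z = 0 := by
    intro z
    ext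
    simp only [ContinuousLinearMap.zero_apply]
    rw [← toSpanSingleton_deriv]
    have hd : HasDerivAt (fun t : ℝ => x t - t • v) (deriv x z - v) z :=
      (hx z).hasDerivAt.sub (by simpa using (hasDerivAt_id z).smul_const v)
    rw [hd.deriv, hconst z]
    simp
  have := is_const_of_fderiv_eq_zero hg this t 0
  simp only [zero_smul, sub_zero] at this
  have : x t - t • v = x 0 := this
  linear_combination (norm := abel) this

/-- **The inertial coordinates and the Galilean group.**
For `a > 0`, `b ∈ ℝ` and a smooth map `F : ℝ³ × ℝ → ℝ³`, the following are equivalent: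
(i) every free motion `x` (twice differentiable with `x'' ≡ 0`) is mapped by
`y(s) := F(x((s−b)/a), (s−b)/a)` to a path with `y'' ≡ 0`;
(ii) `F(x,t) = A x + B t + C` for some matrix `A` and vectors `B, C`.
Moreover, if `F(·,t)` is bijective for each `t`, then `A` is invertible. -/
theorem galilean_group_characterization
    (a : ℝ) (ha : 0 < a) (b : ℝ)
    (F : (Fin 3 → ℝ) → ℝ → (Fin 3 → ℝ))
    (hF : ContDiff ℝ (⊤ : ℕ∞) (fun p : (Fin 3 → ℝ) × ℝ => F p.1 p.2)) :
    ((∀ x : ℝ → (Fin 3 → ℝ), Differentiable ℝ x → Differentiable ℝ (deriv x) →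
        (∀ t : ℝ, deriv (deriv x) t = 0) →
        ∀ s : ℝ, deriv (deriv (fun s' => F (x ((s' - b) / a)) ((s' - b) / a))) s = 0) ↔
      (∃ (A : Matrix (Fin 3) (Fin 3) ℝ) (B C : Fin 3 → ℝ),
        ∀ (x : Fin 3 → ℝ) (t : ℝ), F x t = A.mulVec x + t • B + C)) ∧
    (∀ (A : Matrix (Fin 3) (Fin 3) ℝ) (B C : Fin 3 → ℝ),
      (∀ (x : Fin 3 → ℝ) (t : ℝ), F x t = A.mulVec x + t • B + C) →
      (∀ t : ℝ, Function.Bijective fun x => F x t) → IsUnit A) := by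
  classical
  have ha' : a ≠ 0 := ne_of_gt ha
  constructor
  · constructor
    · -- forward direction: (i) → affine form
      intro hyp
      set G : (Fin 3 → ℝ) × ℝ → (Fin 3 → ℝ) := fun p => F p.1 p.2 with hGdef
      have hG1 : Differentiable ℝ G := hF.differentiable (by simp)
      have hH1 : Differentiable ℝ (fderiv ℝ G) := (hF.fderiv_right (m := (⊤ : ℕ∞)) (by simp)).differentiable (by simp)
      -- second derivative vanishes along directions (v, 1)
      have key1 : ∀ (r : (Fin 3 → ℝ) × ℝ) (v : Fin 3 → ℝ),
          fderiv ℝ (fderiv ℝ G) r ((v, 1) : (Fin 3 → ℝ) × ℝ) ((v, 1) : (Fin 3 → ℝ) × ℝ) = 0 := by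
        intro r v
        set p : Fin 3 → ℝ := r.1 - r.2 • v with hp
        set x : ℝ → Fin 3 → ℝ := fun t => p + t • v with hxdef
        have hx1 : Differentiable ℝ x := by
          intro t
          exact (((hasDerivAt_id t).smul_const v).const_add p).differentiableAt
        have hdx : deriv x = fun _ => v := by
          funext t
          exact (((hasDerivAt_id t).smul_const v).const_add p).deriv.trans (one_smul _ _)
        have hx2 : Differentiable ℝ (deriv x) := by rw [hdx]; exact differentiable_const v
        have hx3 : ∀ t, deriv (deriv x) t = 0 := by intro t; rw [hdx]; simp
        have h := hyp x hx1 hx2 hx3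
        set u0 : (Fin 3 → ℝ) × ℝ := ((1 / a) • v, 1 / a) with hu0
        set q0 : (Fin 3 → ℝ) × ℝ := (p - (b / a) • v, -(b / a)) with hq0
        have hfun : (fun s' => F (x ((s' - b) / a)) ((s' - b) / a))
            = fun s' : ℝ => G (q0 + s' • u0) := by
          funext s'
          have e2 : (s' - b)/a = s' * (1/a) - b/a := by field_simp
          have h1 : q0 + s' • u0 = (p + ((s' - b) / a) • v, (s' - b) / a) := by
            rw [Prod.ext_iff]
            refine ⟨?_, ?_⟩
            · simp only [hq0, hu0, Prod.fst_add, Prod.smul_fst, smul_smul]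
              rw [e2]
              module
            · simp only [hq0, hu0, Prod.snd_add, Prod.smul_snd, smul_eq_mul]
              field_simp
              try ring
          rw [h1]
        have h2 := h (a * r.2 + b)
        rw [hfun] at h2
        rw [deriv2_line' hF q0 u0 (a * r.2 + b)] at h2
        have hq : q0 + (a * r.2 + b) • u0 = r := by
          rw [Prod.ext_iff]
          refine ⟨?_, ?_⟩
          · simp only [hq0, hu0, hp, Prod.fst_add, Prod.smul_fst, smul_smul]
            rw [show (a * r.2 + b) * (1 / a) = r.2 + b / a by field_simp]
            module
          · simp only [hq0, hu0, Prod.snd_add, Prod.smul_snd, smul_eq_mul]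
            field_simp
            ring
        rw [hq] at h2
        have hsc : ((v, 1) : (Fin 3 → ℝ) × ℝ) = a • u0 := by
          rw [Prod.ext_iff]
          refine ⟨?_, ?_⟩
          · simp only [hu0, Prod.smul_fst, smul_smul]
            rw [show a * (1 / a) = 1 by field_simp]
            module
          · simp only [hu0, Prod.smul_snd, smul_eq_mul]
            field_simp
        rw [hsc]
        simp only [map_smul, ContinuousLinearMap.smul_apply]
        rw [h2]
        simp
      -- symmetry of second derivative
      have hsymm : ∀ (r : (Fin 3 → ℝ) × ℝ) (u w : (Fin 3 → ℝ) × ℝ),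
          fderiv ℝ (fderiv ℝ G) r u w = fderiv ℝ (fderiv ℝ G) r w u := by
        intro r u w
        exact second_derivative_symmetric (fun y => (hG1 y).hasFDerivAt)
          ((hH1 r).hasFDerivAt) u w
      -- polarization
      have key2 : ∀ (r : (Fin 3 → ℝ) × ℝ) (v w : Fin 3 → ℝ),
          fderiv ℝ (fderiv ℝ G) r ((v, 1) : (Fin 3 → ℝ) × ℝ)
            ((w, 1) : (Fin 3 → ℝ) × ℝ) = 0 := by
        intro r v w
        set B2 := fderiv ℝ (fderiv ℝ G) r with hB2
        have hsum : ((v, 1) : (Fin 3 → ℝ) × ℝ) + ((w, 1) : (Fin 3 → ℝ) × ℝ)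
            = (2 : ℝ) • ((((2:ℝ)⁻¹) • (v + w), 1) : (Fin 3 → ℝ) × ℝ) := by
          rw [Prod.ext_iff]
          refine ⟨?_, ?_⟩
          · simp only [Prod.fst_add, Prod.smul_fst, smul_smul]
            module
          · norm_num
        have h4 : B2 ((v,1) + (w,1)) ((v,1) + (w,1)) = 0 := by
          rw [hsum]
          simp only [map_smul, ContinuousLinearMap.smul_apply]
          rw [key1 r (((2:ℝ)⁻¹) • (v + w))]
          simp
        rw [map_add] at h4
        simp only [ContinuousLinearMap.add_apply, map_add] at h4
        rw [key1 r v, key1 r w, hsymm r (w,1) (v,1)] at h4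
        simp only [zero_add, add_zero] at h4
        have h5 : (2:ℝ) • B2 (v,1) (w,1) = 0 := by rw [two_smul]; exact h4
        have h2 : (2:ℝ) ≠ 0 := by norm_num
        exact (smul_eq_zero.mp h5).resolve_left h2
      -- the second derivative vanishes identically
      have key3 : ∀ r : (Fin 3 → ℝ) × ℝ, fderiv ℝ (fderiv ℝ G) r = 0 := by
        intro r
        set B2 := fderiv ℝ (fderiv ℝ G) r with hB2
        have decomp : ∀ u : (Fin 3 → ℝ) × ℝ,
            u = ((u.1, 1) : (Fin 3 → ℝ) × ℝ)
              + (u.2 - 1) • (((0 : Fin 3 → ℝ), 1) : (Fin 3 → ℝ) × ℝ) := by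
          intro u
          rw [Prod.ext_iff]
          refine ⟨?_, ?_⟩
          · simp only [Prod.fst_add, Prod.smul_fst, smul_zero, add_zero]
          · simp only [Prod.snd_add, Prod.smul_snd, smul_eq_mul, mul_one]
            ring
        apply ContinuousLinearMap.ext; intro u
        apply ContinuousLinearMap.ext; intro w
        simp only [ContinuousLinearMap.zero_apply]
        rw [decomp u, decomp w]
        simp only [map_add, map_smul, ContinuousLinearMap.add_apply,
          ContinuousLinearMap.smul_apply]
        rw [key2 r u.1 w.1, key2 r u.1 0, key2 r 0 w.1, key2 r 0 0]
        simp
      -- hence the derivative of G is constant and G is affine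
      have hconstH : ∀ q, fderiv ℝ G q = fderiv ℝ G 0 := fun q =>
        is_const_of_fderiv_eq_zero hH1 key3 q 0
      set L := fderiv ℝ G 0 with hL
      have haff : ∀ q, G q = L q + G 0 := by
        intro q
        have hK : Differentiable ℝ (fun q => G q - L q) := hG1.sub L.differentiable
        have hKz : ∀ z, fderiv ℝ (fun q => G q - L q) z = 0 := by
          intro z
          rw [fderiv_fun_sub (hG1 z) L.differentiableAt, L.fderiv, hconstH z]
          simp
        have h0 := is_const_of_fderiv_eq_zero hK hKz q 0
        simp only [map_zero, sub_zero] at h0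
        have : G q - L q = G 0 := h0
        linear_combination (norm := abel) this
      refine ⟨Matrix.of (fun i j => L (Pi.single j 1, 0) i), L (0, 1), G 0, ?_⟩
      intro x t
      have hxt : ((x, t) : (Fin 3 → ℝ) × ℝ) = ((x, 0) : (Fin 3 → ℝ) × ℝ)
          + t • (((0 : Fin 3 → ℝ), (1:ℝ)) : (Fin 3 → ℝ) × ℝ) := by
        rw [Prod.ext_iff]
        refine ⟨?_, ?_⟩
        · simp
        · simp
      have hxsum : ((x, (0:ℝ)) : (Fin 3 → ℝ) × ℝ)
          = ∑ j : Fin 3, x j • (((Pi.single j (1:ℝ)) : Fin 3 → ℝ), (0:ℝ)) := by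
        rw [Prod.ext_iff]
        refine ⟨?_, ?_⟩
        · rw [Prod.fst_sum]
          simp only [Prod.smul_fst]
          have : ∀ j : Fin 3, x j • (Pi.single j (1:ℝ) : Fin 3 → ℝ) = Pi.single j (x j) := by
            intro j
            funext k
            by_cases h : k = j <;> simp [Pi.single_apply, h]
          simp_rw [this]
          exact (Finset.univ_sum_single x).symm
        · rw [Prod.snd_sum]
          simp
      have hFxt : F x t = G (x, t) := rfl
      rw [hFxt, haff (x, t), hxt, map_add, map_smul, hxsum, map_sum]
      simp_rw [map_smul]
      funext i
      simp only [Pi.add_apply, Finset.sum_apply, Pi.smul_apply, smul_eq_mul,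
        Matrix.mulVec, dotProduct, Matrix.of_apply]
      rw [Finset.sum_congr rfl (fun j _ => mul_comm (x j) (L (Pi.single j 1, 0) i))]
    · -- reverse direction: affine maps preserve free motions
      rintro ⟨A, B, C, hform⟩
      intro x hx1 hx2 hx3 s
      have hline := line_of_deriv2_zero hx1 hx2 hx3
      set p := x 0 with hp
      set v := deriv x 0 with hv
      set w : Fin 3 → ℝ := (1 / a) • (A.mulVec v + B) with hw
      set c : Fin 3 → ℝ := A.mulVec p + C - (b / a) • (A.mulVec v + B) with hc
      have hfun : (fun s' => F (x ((s' - b) / a)) ((s' - b) / a))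
          = fun s' : ℝ => c + s' • w := by
        funext s'
        rw [hline ((s' - b) / a), hform]
        rw [Matrix.mulVec_add, Matrix.mulVec_smul]
        rw [show (s' - b) / a = s' * (1 / a) - b / a by field_simp]
        simp only [hc, hw]
        module
      rw [hfun]
      have hd1 : deriv (fun s' : ℝ => c + s' • w) = fun _ => w := by
        funext s'
        exact (((hasDerivAt_id s').smul_const w).const_add c).deriv.trans (one_smul _ _)
      rw [hd1]
      simp
  · -- invertibility
    intro A B C hform hbij
    rw [Matrix.isUnit_iff_isUnit_det, isUnit_iff_ne_zero]
    intro hdet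
    obtain ⟨v, hv0, hv⟩ := (Matrix.exists_mulVec_eq_zero_iff).mpr hdet
    have h1 : F v 0 = F 0 0 := by
      rw [hform, hform, hv, Matrix.mulVec_zero]
    exact hv0 ((hbij 0).1 h1)
end

section
/- Let I ⊆ ℝ be an interval, G, Λ ∈ ℝ, let H : I → ℝ be differentiable and ρ : I → ℝ. Define u : ℝ³ × I → ℝ³ by u(x,t) = H(t) x and φ : ℝ³ × I → ℝ by φ(x,t) = ((2πGρ(t))/3 − Λ/6)|x|². Then the Euler (Navier–Stokes) equation ∂_t u_i + u_j ∂_j u_i = −∂_i φ holds for all x ∈ ℝ³ and t ∈ I if and only if H'(t) + H(t)² = −(4π/3)G ρ(t) + Λ/3 for all t ∈ I. -/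
noncomputable section

/-- Spatial partial derivative `∂ᵢ f` of a scalar field on `ℝ³` (Cartesian coordinates). -/
def pd (i : Fin 3) (f : (Fin 3 → ℝ) → ℝ) (x : Fin 3 → ℝ) : ℝ :=
  fderiv ℝ f x (Pi.single i 1)

lemma pd_lin (c : ℝ) (i j : Fin 3) (x : Fin 3 → ℝ) :
    pd j (fun y => c * y i) x = c * (Pi.single j 1 : Fin 3 → ℝ) i := by
  have h : HasFDerivAt (fun y : Fin 3 → ℝ => c * y i)
      (c • (ContinuousLinearMap.proj i : (Fin 3 → ℝ) →L[ℝ] ℝ)) x := by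
    exact ((ContinuousLinearMap.proj i : (Fin 3 → ℝ) →L[ℝ] ℝ).hasFDerivAt).const_mul c
  simp [pd, h.fderiv]

lemma pd_quad (c : ℝ) (i : Fin 3) (x : Fin 3 → ℝ) :
    pd i (fun y => c * ∑ k, y k ^ 2) x = c * (2 * x i) := by
  have h : HasFDerivAt (fun y : Fin 3 → ℝ => c * ∑ k, y k ^ 2)
      (c • ∑ k : Fin 3, (2 * x k) • (ContinuousLinearMap.proj k : (Fin 3 → ℝ) →L[ℝ] ℝ)) x := by
    have hk : ∀ k : Fin 3, HasFDerivAt (fun y : Fin 3 → ℝ => y k ^ 2)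
        ((2 * x k) • (ContinuousLinearMap.proj k : (Fin 3 → ℝ) →L[ℝ] ℝ)) x := by
      intro k
      have hp := ((ContinuousLinearMap.proj k : (Fin 3 → ℝ) →L[ℝ] ℝ).hasFDerivAt (x := x))
      have := hp.fun_mul hp
      have h2 : HasFDerivAt (fun y : Fin 3 → ℝ => y k ^ 2)
          ((ContinuousLinearMap.proj k : (Fin 3 → ℝ) →L[ℝ] ℝ) x • (ContinuousLinearMap.proj k : (Fin 3 → ℝ) →L[ℝ] ℝ) +
            (ContinuousLinearMap.proj k : (Fin 3 → ℝ) →L[ℝ] ℝ) x • (ContinuousLinearMap.proj k : (Fin 3 → ℝ) →L[ℝ] ℝ)) x := by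
        simpa [sq] using this
      convert h2 using 1
      ext v; simp [two_mul]; ring
    exact (HasFDerivAt.fun_sum (fun k _ => hk k)).const_mul c
  simp only [pd, h.fderiv]
  simp [Finset.sum_apply, Pi.single_apply, Finset.mul_sum]
  try ring

/-- **The Euler equation in a homogeneous and isotropic Newtonian universe.**
For `u(x,t) = H(t)x` and `φ(x,t) = ((2πGρ(t))/3 − Λ/6)|x|²`, the Euler equation
`∂ₜuᵢ + uⱼ∂ⱼuᵢ = −∂ᵢφ` holds for all `x ∈ ℝ³` and `t ∈ I` if and only if
`H'(t) + H(t)² = −(4π/3)Gρ(t) + Λ/3` for all `t ∈ I`.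
(`H'` is the derivative of `H` within the interval `I`, so `∂ₜuᵢ = H'(t)xᵢ`.) -/
theorem homogeneous_isotropic_euler
    (I : Set ℝ) (hI : I.OrdConnected) (G Λ : ℝ) (H H' ρ : ℝ → ℝ)
    (hH : ∀ t ∈ I, HasDerivWithinAt H (H' t) I t) :
    (∀ t ∈ I, ∀ (x : Fin 3 → ℝ) (i : Fin 3),
        H' t * x i + ∑ j, (H t * x j) * pd j (fun y => H t * y i) x
          = - pd i (fun y => (2 * Real.pi * G * ρ t / 3 - Λ / 6) * ∑ k, y k ^ 2) x) ↔
      (∀ t ∈ I, H' t + H t ^ 2 = -(4 * Real.pi / 3) * G * ρ t + Λ / 3) := by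
  have key : ∀ t x i, (∑ j, (H t * x j) * pd j (fun y => H t * y i) x) = H t ^ 2 * x i := by
    intro t x i
    simp only [pd_lin]
    simp [Pi.single_apply, Finset.mul_sum]
    ring
  constructor
  · intro h t ht
    have := h t ht (Pi.single (0 : Fin 3) 1) 0
    rw [key, pd_quad] at this
    simp at this
    linarith
  · intro h t ht x i
    rw [key, pd_quad]
    have := h t ht
    linear_combination x i * this
end
end

section
/- Let u : ℝ³ × ℝ → ℝ³, φ, ρ : ℝ³ × ℝ → ℝ and A : ℝ³ × ℝ → ℝ³ be smooth, and let G, Λ ∈ ℝ. Suppose the Euler (Navier–Stokes) equation ∂_t u_i + u_j ∂_j u_i = −∂_i φ + A_i and the Poisson equation ∂_i∂_i φ = 4πGρ − Λ hold everywhere. Then the shear tensor satisfies the propagation equation: ∂_t σ_ij + u_k ∂_k σ_ij + σ_ik σ_kj + (2/3)θ σ_ij − (1/3)δ_ij (2σ² + ω² − ∂_k A_k) + ω_i ω_j + E_ij − (1/2)(∂_j A_i + ∂_i A_j) = 0 everywhere, where E_ij = ∂_i∂_j φ − (1/3)δ_ij ∂_k∂_k φ is the tidal force tensor. -/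
noncomputable section

/-- Kronecker delta `δᵢⱼ`. -/
def kdelta (i j : Fin 3) : ℝ := if i = j then 1 else 0

/-- Levi-Civita symbol `εᵢⱼₖ` with `ε₁₂₃ = +1`. -/
def eps (i j k : Fin 3) : ℝ :=
  if (i = 0 ∧ j = 1 ∧ k = 2) ∨ (i = 1 ∧ j = 2 ∧ k = 0) ∨ (i = 2 ∧ j = 0 ∧ k = 1) then 1
  else if (i = 2 ∧ j = 1 ∧ k = 0) ∨ (i = 1 ∧ j = 0 ∧ k = 2) ∨ (i = 0 ∧ j = 2 ∧ k = 1) then -1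
  else 0

/-- Expansion scalar `θ = ∂ᵢ uᵢ`. -/
def theta (u : (Fin 3 → ℝ) → ℝ → Fin 3 → ℝ) (x : Fin 3 → ℝ) (t : ℝ) : ℝ :=
  ∑ i, pd i (fun y => u y t i) x

/-- Shear tensor `σᵢⱼ = (1/2)(∂ⱼuᵢ + ∂ᵢuⱼ) − (1/3)δᵢⱼθ`. -/
def shear (u : (Fin 3 → ℝ) → ℝ → Fin 3 → ℝ) (i j : Fin 3) (x : Fin 3 → ℝ) (t : ℝ) : ℝ :=
  (1/2) * (pd j (fun y => u y t i) x + pd i (fun y => u y t j) x)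
    - (1/3) * kdelta i j * theta u x t

/-- Vorticity tensor `ωᵢⱼ = (1/2)(∂ⱼuᵢ − ∂ᵢuⱼ)`. -/
def vortT (u : (Fin 3 → ℝ) → ℝ → Fin 3 → ℝ) (i j : Fin 3) (x : Fin 3 → ℝ) (t : ℝ) : ℝ :=
  (1/2) * (pd j (fun y => u y t i) x - pd i (fun y => u y t j) x)

/-- Vorticity vector `ωᵢ = (1/2)εᵢⱼₖ ∂ⱼuₖ`. -/
def vortV (u : (Fin 3 → ℝ) → ℝ → Fin 3 → ℝ) (i : Fin 3) (x : Fin 3 → ℝ) (t : ℝ) : ℝ :=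
  (1/2) * ∑ j, ∑ k, eps i j k * pd j (fun y => u y t k) x

/-- Shear scalar squared `σ² = (1/2)σᵢⱼσᵢⱼ`. -/
def shear2 (u : (Fin 3 → ℝ) → ℝ → Fin 3 → ℝ) (x : Fin 3 → ℝ) (t : ℝ) : ℝ :=
  (1/2) * ∑ i, ∑ j, shear u i j x t ^ 2

/-- Vorticity scalar squared `ω² = ωᵢωᵢ`. -/
def vort2 (u : (Fin 3 → ℝ) → ℝ → Fin 3 → ℝ) (x : Fin 3 → ℝ) (t : ℝ) : ℝ :=
  ∑ i, vortV u i x t ^ 2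

/-- Tidal force tensor `Eᵢⱼ = ∂ᵢ∂ⱼφ − (1/3)δᵢⱼ ∂ₖ∂ₖφ`. -/
def tidal (φ : (Fin 3 → ℝ) → ℝ → ℝ) (i j : Fin 3) (x : Fin 3 → ℝ) (t : ℝ) : ℝ :=
  pd i (pd j (fun y => φ y t)) x
    - (1/3) * kdelta i j * ∑ k, pd k (pd k (fun y => φ y t)) x

abbrev Pt := (Fin 3 → ℝ) × ℝ

/-- spatial direction -/
def sdir (j : Fin 3) : Pt := (Pi.single j 1, 0)
/-- time direction -/
def tdir : Pt := (0, 1)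

theorem pd_slice (F : Pt → ℝ) (hF : Differentiable ℝ F) (x : Fin 3 → ℝ) (t : ℝ) (j : Fin 3) :
    pd j (fun y => F (y, t)) x = fderiv ℝ F (x, t) (sdir j) := by
  have h : HasFDerivAt (fun y : Fin 3 → ℝ => F (y, t))
      ((fderiv ℝ F (x, t)).comp ((ContinuousLinearMap.id ℝ (Fin 3 → ℝ)).prod 0)) x :=
    (hF (x, t)).hasFDerivAt.comp x (HasFDerivAt.prodMk (hasFDerivAt_id x) (hasFDerivAt_const t x))
  rw [pd, h.fderiv]; rfl

theorem hasDerivAt_slice (F : Pt → ℝ) (hF : Differentiable ℝ F) (x : Fin 3 → ℝ) (t : ℝ) :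
    HasDerivAt (fun s => F (x, s)) (fderiv ℝ F (x, t) tdir) t := by
  have h : HasFDerivAt (fun s : ℝ => F (x, s))
      ((fderiv ℝ F (x, t)).comp ((0 : ℝ →L[ℝ] (Fin 3 → ℝ)).prod (ContinuousLinearMap.id ℝ ℝ))) t :=
    (hF (x, t)).hasFDerivAt.comp t (HasFDerivAt.prodMk (hasFDerivAt_const x t) (hasFDerivAt_id t))
  have := h.hasDerivAt
  simpa [tdir] using this

theorem contDiff_dirDeriv (F : Pt → ℝ) (hF : ContDiff ℝ (⊤ : ℕ∞) F) (w : Pt) :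
    ContDiff ℝ (⊤ : ℕ∞) (fun p => fderiv ℝ F p w) :=
  (hF.fderiv_right (by simp)).clm_apply contDiff_const

theorem fderiv_swap (F : Pt → ℝ) (hF : ContDiff ℝ (⊤ : ℕ∞) F) (p v w : Pt) :
    fderiv ℝ (fun q => fderiv ℝ F q v) p w = fderiv ℝ (fun q => fderiv ℝ F q w) p v := by
  have hd : ∀ q, HasFDerivAt F (fderiv ℝ F q) q :=
    fun q => ((hF.differentiable (by simp)) q).hasFDerivAt
  have h2 : HasFDerivAt (fderiv ℝ F) (fderiv ℝ (fderiv ℝ F) p) p :=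
    (((hF.fderiv_right (m := (⊤ : ℕ∞)) (by simp)).differentiable (by simp)) p).hasFDerivAt
  have key : ∀ a b : Pt, fderiv ℝ (fun q => fderiv ℝ F q a) p b
      = fderiv ℝ (fderiv ℝ F) p b a := by
    intro a b
    rw [fderiv_clm_apply (((hF.fderiv_right (m := (⊤ : ℕ∞)) (by simp)).differentiable (by simp)) p)
      (differentiableAt_const a)]
    simp
  rw [key, key, second_derivative_symmetric hd h2 w v]

theorem fderiv_combo (F1 F2 : Pt → ℝ) (F3 : Fin 3 → Pt → ℝ) (c : ℝ)
    (h1 : Differentiable ℝ F1) (h2 : Differentiable ℝ F2)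
    (h3 : ∀ m, Differentiable ℝ (F3 m)) (p w : Pt) :
    fderiv ℝ (fun q => (1/2 : ℝ) * (F1 q + F2 q) - (1/3) * c * ∑ m, F3 m q) p w
      = (1/2) * (fderiv ℝ F1 p w + fderiv ℝ F2 p w)
        - (1/3) * c * ∑ m, fderiv ℝ (F3 m) p w := by
  have h : HasFDerivAt (fun q => (1/2 : ℝ) * (F1 q + F2 q) - (1/3) * c * ∑ m, F3 m q)
      (((1/2 : ℝ) • (fderiv ℝ F1 p + fderiv ℝ F2 p)) -
        ((1/3) * c) • ∑ m, fderiv ℝ (F3 m) p) p := by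
    exact (((h1 p).hasFDerivAt.add (h2 p).hasFDerivAt).const_mul (1/2)).sub
      ((HasFDerivAt.fun_sum (fun m _ => (h3 m p).hasFDerivAt)).const_mul ((1/3) * c))
  rw [h.fderiv]
  simp [mul_add, Finset.mul_sum]

set_option maxHeartbeats 1000000 in
theorem shear_algebra (L Tm P B : Fin 3 → Fin 3 → ℝ) (S : Fin 3 → Fin 3 → Fin 3 → ℝ)
    (uv : Fin 3 → ℝ)
    (hst : ∀ a b : Fin 3, Tm a b + (∑ k, (uv k * S a b k + L a k * L k b)) + P a b - B a b = 0)
    (hP : ∀ a b : Fin 3, P a b = P b a)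
    (i j : Fin 3) :
    ((1/2) * (Tm i j + Tm j i) - (1/3) * kdelta i j * ∑ m, Tm m m)
    + (∑ k, uv k * ((1/2) * (S i j k + S j i k) - (1/3) * kdelta i j * ∑ m, S m m k))
    + (∑ k, ((1/2) * (L i k + L k i) - (1/3) * kdelta i k * ∑ m, L m m)
        * ((1/2) * (L k j + L j k) - (1/3) * kdelta k j * ∑ m, L m m))
    + (2/3) * (∑ m, L m m) * ((1/2) * (L i j + L j i) - (1/3) * kdelta i j * ∑ m, L m m)
    - (1/3) * kdelta i j *
        (2 * ((1/2) * ∑ a, ∑ b, ((1/2) * (L a b + L b a) - (1/3) * kdelta a b * ∑ m, L m m) ^ 2)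
          + (∑ a, ((1/2) * ∑ b, ∑ c, eps a b c * L c b) ^ 2) - ∑ k, B k k)
    + ((1/2) * ∑ b, ∑ c, eps i b c * L c b) * ((1/2) * ∑ b, ∑ c, eps j b c * L c b)
    + (P i j - (1/3) * kdelta i j * ∑ k, P k k)
    - (1/2) * (B i j + B j i) = 0 := by
  have h00 := hst 0 0
  have h01 := hst 0 1
  have h02 := hst 0 2
  have h10 := hst 1 0
  have h11 := hst 1 1
  have h12 := hst 1 2
  have h20 := hst 2 0
  have h21 := hst 2 1
  have h22 := hst 2 2
  simp only [Fin.sum_univ_three] at h00 h01 h02 h10 h11 h12 h20 h21 h22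
  have hI : ∀ z : Fin 3, z = 0 ∨ z = 1 ∨ z = 2 := by decide
  rcases hI i with rfl | rfl | rfl <;> rcases hI j with rfl | rfl | rfl <;>
    simp only [Fin.sum_univ_three, kdelta, eps, Fin.isValue, Fin.reduceEq, reduceIte,
      and_self, and_true, true_and, and_false, false_and, or_self, or_true, true_or,
      or_false, false_or, if_true, if_false]
  · linear_combination h00 - (1/3) * (h00 + h11 + h22)
  · linear_combination (1/2) * h01 + (1/2) * h10 + (1/2) * hP 0 1
  · linear_combination (1/2) * h02 + (1/2) * h20 + (1/2) * hP 0 2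
  · linear_combination (1/2) * h10 + (1/2) * h01 + (1/2) * hP 1 0
  · linear_combination h11 - (1/3) * (h00 + h11 + h22)
  · linear_combination (1/2) * h12 + (1/2) * h21 + (1/2) * hP 1 2
  · linear_combination (1/2) * h20 + (1/2) * h02 + (1/2) * hP 2 0
  · linear_combination (1/2) * h21 + (1/2) * h12 + (1/2) * hP 2 1
  · linear_combination h22 - (1/3) * (h00 + h11 + h22)

set_option maxHeartbeats 2000000 in
set_option maxRecDepth 8000 in
/-- **The propagation equation for the shear tensor σᵢⱼ.**
If the Euler (Navier–Stokes) equation `∂ₜuᵢ + uⱼ∂ⱼuᵢ = −∂ᵢφ + Aᵢ` and the Poisson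
equation `∂ᵢ∂ᵢφ = 4πGρ − Λ` hold everywhere, then
`∂ₜσᵢⱼ + uₖ∂ₖσᵢⱼ + σᵢₖσₖⱼ + (2/3)θσᵢⱼ − (1/3)δᵢⱼ(2σ² + ω² − ∂ₖAₖ) + ωᵢωⱼ + Eᵢⱼ
  − (1/2)(∂ⱼAᵢ + ∂ᵢAⱼ) = 0` everywhere, where `Eᵢⱼ` is the tidal force tensor. -/
theorem shear_propagation_equation
    (u A : (Fin 3 → ℝ) → ℝ → Fin 3 → ℝ) (φ ρ : (Fin 3 → ℝ) → ℝ → ℝ) (G Λ : ℝ)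
    (hu : ContDiff ℝ (⊤ : ℕ∞) (fun p : (Fin 3 → ℝ) × ℝ => u p.1 p.2))
    (hφ : ContDiff ℝ (⊤ : ℕ∞) (fun p : (Fin 3 → ℝ) × ℝ => φ p.1 p.2))
    (hρ : ContDiff ℝ (⊤ : ℕ∞) (fun p : (Fin 3 → ℝ) × ℝ => ρ p.1 p.2))
    (hA : ContDiff ℝ (⊤ : ℕ∞) (fun p : (Fin 3 → ℝ) × ℝ => A p.1 p.2))
    (euler : ∀ (x : Fin 3 → ℝ) (t : ℝ) (i : Fin 3),
      deriv (fun s => u x s i) t + ∑ j, u x t j * pd j (fun y => u y t i) x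
        = - pd i (fun y => φ y t) x + A x t i)
    (poisson : ∀ (x : Fin 3 → ℝ) (t : ℝ),
      ∑ i, pd i (pd i (fun y => φ y t)) x = 4 * Real.pi * G * ρ x t - Λ) :
    ∀ (x : Fin 3 → ℝ) (t : ℝ) (i j : Fin 3),
      deriv (fun s => shear u i j x s) t
        + ∑ k, u x t k * pd k (fun y => shear u i j y t) x
        + ∑ k, shear u i k x t * shear u k j x t
        + (2/3) * theta u x t * shear u i j x t
        - (1/3) * kdelta i j *
            (2 * shear2 u x t + vort2 u x t - ∑ k, pd k (fun y => A y t k) x)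
        + vortV u i x t * vortV u j x t + tidal φ i j x t
        - (1/2) * (pd j (fun y => A y t i) x + pd i (fun y => A y t j) x) = 0 := by
  intro x t i j
  -- component smoothness
  have hus : ∀ a : Fin 3, ContDiff ℝ (⊤ : ℕ∞) (fun p : Pt => u p.1 p.2 a) := fun a => contDiff_pi.mp hu a
  have hAs : ∀ a : Fin 3, ContDiff ℝ (⊤ : ℕ∞) (fun p : Pt => A p.1 p.2 a) := fun a => contDiff_pi.mp hA a
  have hud : ∀ a : Fin 3, Differentiable ℝ (fun p : Pt => u p.1 p.2 a) :=
    fun a => (hus a).differentiable (by simp)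
  have hAd : ∀ a : Fin 3, Differentiable ℝ (fun p : Pt => A p.1 p.2 a) :=
    fun a => (hAs a).differentiable (by simp)
  have hφd : Differentiable ℝ (fun p : Pt => φ p.1 p.2) := hφ.differentiable (by simp)
  -- smoothness / differentiability of directional derivatives
  have hDU : ∀ (a : Fin 3) (w : Pt), Differentiable ℝ
      (fun p : Pt => fderiv ℝ (fun q : Pt => u q.1 q.2 a) p w) :=
    fun a w => (contDiff_dirDeriv _ (hus a) w).differentiable (by simp)
  have hDφ : ∀ (w : Pt), Differentiable ℝ (fun p : Pt => fderiv ℝ (fun q : Pt => φ q.1 q.2) p w) :=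
    fun w => (contDiff_dirDeriv _ hφ w).differentiable (by simp)
  -- pd rewrites
  have hpd : ∀ (a b : Fin 3) (y : Fin 3 → ℝ) (s : ℝ),
      pd b (fun y' => u y' s a) y = fderiv ℝ (fun q : Pt => u q.1 q.2 a) (y, s) (sdir b) :=
    fun a b y s => pd_slice (fun q : Pt => u q.1 q.2 a) (hud a) y s b
  have hpdA : ∀ (a b : Fin 3) (y : Fin 3 → ℝ) (s : ℝ),
      pd b (fun y' => A y' s a) y = fderiv ℝ (fun q : Pt => A q.1 q.2 a) (y, s) (sdir b) :=
    fun a b y s => pd_slice (fun q : Pt => A q.1 q.2 a) (hAd a) y s b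
  have hpdφ : ∀ (b : Fin 3) (y : Fin 3 → ℝ) (s : ℝ),
      pd b (fun y' => φ y' s) y = fderiv ℝ (fun q : Pt => φ q.1 q.2) (y, s) (sdir b) :=
    fun b y s => pd_slice (fun q : Pt => φ q.1 q.2) hφd y s b

  -- the differentiated Euler equation (canonical form)
  have hstar : ∀ a b : Fin 3,
      fderiv ℝ (fun p : Pt => fderiv ℝ (fun q : Pt => u q.1 q.2 a) p (sdir b)) (x, t) tdir
      + (∑ k, (u x t k *
            fderiv ℝ (fun p : Pt => fderiv ℝ (fun q : Pt => u q.1 q.2 a) p (sdir b)) (x, t) (sdir k)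
          + fderiv ℝ (fun q : Pt => u q.1 q.2 a) (x, t) (sdir k) *
            fderiv ℝ (fun q : Pt => u q.1 q.2 k) (x, t) (sdir b)))
      + fderiv ℝ (fun p : Pt => fderiv ℝ (fun q : Pt => φ q.1 q.2) p (sdir a)) (x, t) (sdir b)
      - fderiv ℝ (fun q : Pt => A q.1 q.2 a) (x, t) (sdir b) = 0 := by
    intro a b
    have hzero : ∀ p : Pt,
        fderiv ℝ (fun q : Pt => u q.1 q.2 a) p tdir
        + ∑ k, u p.1 p.2 k * fderiv ℝ (fun q : Pt => u q.1 q.2 a) p (sdir k)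
        + fderiv ℝ (fun q : Pt => φ q.1 q.2) p (sdir a) - A p.1 p.2 a = 0 := by
      rintro ⟨y, s⟩
      have h := euler y s a
      have hderiv : deriv (fun s' => u y s' a) s
          = fderiv ℝ (fun q : Pt => u q.1 q.2 a) (y, s) tdir :=
        (hasDerivAt_slice (fun q : Pt => u q.1 q.2 a) (hud a) y s).deriv
      rw [hderiv] at h
      simp only [hpd, hpdφ] at h
      simp only []
      linarith [h]
    have hG : HasFDerivAt (fun p : Pt =>
        fderiv ℝ (fun q : Pt => u q.1 q.2 a) p tdir
        + ∑ k, u p.1 p.2 k * fderiv ℝ (fun q : Pt => u q.1 q.2 a) p (sdir k)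
        + fderiv ℝ (fun q : Pt => φ q.1 q.2) p (sdir a) - A p.1 p.2 a)
        (fderiv ℝ (fun p : Pt => fderiv ℝ (fun q : Pt => u q.1 q.2 a) p tdir) (x, t)
        + ∑ k, (u x t k • fderiv ℝ (fun p : Pt => fderiv ℝ (fun q : Pt => u q.1 q.2 a) p (sdir k)) (x, t)
            + fderiv ℝ (fun q : Pt => u q.1 q.2 a) (x, t) (sdir k) •
                fderiv ℝ (fun q : Pt => u q.1 q.2 k) (x, t))
        + fderiv ℝ (fun p : Pt => fderiv ℝ (fun q : Pt => φ q.1 q.2) p (sdir a)) (x, t)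
        - fderiv ℝ (fun q : Pt => A q.1 q.2 a) (x, t)) (x, t) := by
      exact ((((hDU a tdir (x, t)).hasFDerivAt.add
        (HasFDerivAt.fun_sum (fun k _ => ((hud k (x, t)).hasFDerivAt.mul
          (hDU a (sdir k) (x, t)).hasFDerivAt)))).add
        (hDφ (sdir a) (x, t)).hasFDerivAt).sub (hAd a (x, t)).hasFDerivAt)
    have hGf0 : fderiv ℝ (fun p : Pt =>
        fderiv ℝ (fun q : Pt => u q.1 q.2 a) p tdir
        + ∑ k, u p.1 p.2 k * fderiv ℝ (fun q : Pt => u q.1 q.2 a) p (sdir k)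
        + fderiv ℝ (fun q : Pt => φ q.1 q.2) p (sdir a) - A p.1 p.2 a) (x, t) = 0 := by
      rw [show (fun p : Pt =>
        fderiv ℝ (fun q : Pt => u q.1 q.2 a) p tdir
        + ∑ k, u p.1 p.2 k * fderiv ℝ (fun q : Pt => u q.1 q.2 a) p (sdir k)
        + fderiv ℝ (fun q : Pt => φ q.1 q.2) p (sdir a) - A p.1 p.2 a) = (fun _ : Pt => (0 : ℝ))
        from funext (fun p => hzero p)]
      exact fderiv_const_apply 0
    rw [hG.fderiv] at hGf0
    have hDb := congrArg (fun L : Pt →L[ℝ] ℝ => L (sdir b)) hGf0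
    simp only [ContinuousLinearMap.add_apply, ContinuousLinearMap.sub_apply,
      ContinuousLinearMap.coe_sum', Finset.sum_apply, ContinuousLinearMap.smul_apply,
      smul_eq_mul, ContinuousLinearMap.zero_apply] at hDb
    have hsw1 : fderiv ℝ (fun p : Pt => fderiv ℝ (fun q : Pt => u q.1 q.2 a) p tdir) (x, t) (sdir b)
        = fderiv ℝ (fun p : Pt => fderiv ℝ (fun q : Pt => u q.1 q.2 a) p (sdir b)) (x, t) tdir :=
      fderiv_swap (fun q : Pt => u q.1 q.2 a) (hus a) (x, t) tdir (sdir b)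
    have hsw2 : ∀ k : Fin 3,
        fderiv ℝ (fun p : Pt => fderiv ℝ (fun q : Pt => u q.1 q.2 a) p (sdir k)) (x, t) (sdir b)
        = fderiv ℝ (fun p : Pt => fderiv ℝ (fun q : Pt => u q.1 q.2 a) p (sdir b)) (x, t) (sdir k) :=
      fun k => fderiv_swap (fun q : Pt => u q.1 q.2 a) (hus a) (x, t) (sdir k) (sdir b)
    simp only [hsw1, hsw2] at hDb
    linarith [hDb]
  -- the "shear combination" function and its differentiability
  have hFcdiff : Differentiable ℝ (fun p : Pt =>
      (1/2 : ℝ) * (fderiv ℝ (fun q : Pt => u q.1 q.2 i) p (sdir j)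
        + fderiv ℝ (fun q : Pt => u q.1 q.2 j) p (sdir i))
      - (1/3) * kdelta i j * ∑ m, fderiv ℝ (fun q : Pt => u q.1 q.2 m) p (sdir m)) :=
    (((hDU i (sdir j)).add (hDU j (sdir i))).const_mul (1/2)).sub
      ((Differentiable.fun_sum (fun m _ => hDU m (sdir m))).const_mul ((1/3) * kdelta i j))
  -- time derivative of the shear
  have hds : deriv (fun s => shear u i j x s) t
      = (1/2) * (fderiv ℝ (fun p : Pt => fderiv ℝ (fun q : Pt => u q.1 q.2 i) p (sdir j)) (x, t) tdir
          + fderiv ℝ (fun p : Pt => fderiv ℝ (fun q : Pt => u q.1 q.2 j) p (sdir i)) (x, t) tdir)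
        - (1/3) * kdelta i j *
          ∑ m, fderiv ℝ (fun p : Pt => fderiv ℝ (fun q : Pt => u q.1 q.2 m) p (sdir m)) (x, t) tdir := by
    have e : (fun s => shear u i j x s) = (fun s => (fun p : Pt =>
        (1/2 : ℝ) * (fderiv ℝ (fun q : Pt => u q.1 q.2 i) p (sdir j)
          + fderiv ℝ (fun q : Pt => u q.1 q.2 j) p (sdir i))
        - (1/3) * kdelta i j * ∑ m, fderiv ℝ (fun q : Pt => u q.1 q.2 m) p (sdir m)) (x, s)) := by
      funext s
      simp only [shear, theta, hpd]
    rw [e, (hasDerivAt_slice _ hFcdiff x t).deriv]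
    exact fderiv_combo _ _ _ _ (hDU i (sdir j)) (hDU j (sdir i)) (fun m => hDU m (sdir m)) (x, t) tdir
  -- spatial derivatives of the shear
  have hpdshear : ∀ k : Fin 3, pd k (fun y => shear u i j y t) x
      = (1/2) * (fderiv ℝ (fun p : Pt => fderiv ℝ (fun q : Pt => u q.1 q.2 i) p (sdir j)) (x, t) (sdir k)
          + fderiv ℝ (fun p : Pt => fderiv ℝ (fun q : Pt => u q.1 q.2 j) p (sdir i)) (x, t) (sdir k))
        - (1/3) * kdelta i j *
          ∑ m, fderiv ℝ (fun p : Pt => fderiv ℝ (fun q : Pt => u q.1 q.2 m) p (sdir m)) (x, t) (sdir k) := by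
    intro k
    have e : (fun y => shear u i j y t) = (fun y => (fun p : Pt =>
        (1/2 : ℝ) * (fderiv ℝ (fun q : Pt => u q.1 q.2 i) p (sdir j)
          + fderiv ℝ (fun q : Pt => u q.1 q.2 j) p (sdir i))
        - (1/3) * kdelta i j * ∑ m, fderiv ℝ (fun q : Pt => u q.1 q.2 m) p (sdir m)) (y, t)) := by
      funext y
      simp only [shear, theta, hpd]
    rw [e, pd_slice _ hFcdiff x t k]
    exact fderiv_combo _ _ _ _ (hDU i (sdir j)) (hDU j (sdir i)) (fun m => hDU m (sdir m)) (x, t) (sdir k)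
  -- tidal tensor entries
  have htidal : ∀ a b : Fin 3, pd b (pd a (fun y => φ y t)) x
      = fderiv ℝ (fun p : Pt => fderiv ℝ (fun q : Pt => φ q.1 q.2) p (sdir b)) (x, t) (sdir a) := by
    intro a b
    have e : pd a (fun y => φ y t)
        = (fun y => (fun p : Pt => fderiv ℝ (fun q : Pt => φ q.1 q.2) p (sdir a)) (y, t)) :=
      funext fun y => hpdφ a y t
    rw [e, pd_slice _ (hDφ (sdir a)) x t b]
    exact fderiv_swap (fun q : Pt => φ q.1 q.2) hφ (x, t) (sdir a) (sdir b)
  -- assemble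
  have key := shear_algebra
    (fun a b => fderiv ℝ (fun q : Pt => u q.1 q.2 a) (x, t) (sdir b))
    (fun a b => fderiv ℝ (fun p : Pt => fderiv ℝ (fun q : Pt => u q.1 q.2 a) p (sdir b)) (x, t) tdir)
    (fun a b => fderiv ℝ (fun p : Pt => fderiv ℝ (fun q : Pt => φ q.1 q.2) p (sdir a)) (x, t) (sdir b))
    (fun a b => fderiv ℝ (fun q : Pt => A q.1 q.2 a) (x, t) (sdir b))
    (fun a b k => fderiv ℝ (fun p : Pt => fderiv ℝ (fun q : Pt => u q.1 q.2 a) p (sdir b)) (x, t) (sdir k))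
    (fun k => u x t k) hstar
    (fun a b => fderiv_swap (fun q : Pt => φ q.1 q.2) hφ (x, t) (sdir a) (sdir b)) i j
  beta_reduce at key
  rw [hds]
  simp only [hpdshear]
  simp only [shear2, vort2, vortV, tidal, htidal, shear, theta, hpd, hpdA]
  linear_combination key
end
end
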